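/- Let ℓ ∈ {0,1}, k ∈ {0,…,q_0−1}, j ∈ {0,…,q_0−1} with j ≥ q_0 − (k+ℓ). Then j + k + ℓ + 2 ≤ m_{j,k,ℓ} ≤ j + k + ℓ + 3, and if moreover j + k + ℓ ≤ 2q_0 − 2 then m_{j,k,ℓ} = j + k + ℓ + 2. -/

import Mathlib

/-- `q₀ = 2^s`. -/
def q0 (s : ℕ) : ℕ := 2 ^ s

/-- `q = 2 q₀²`. -/
def qS (s : ℕ) : ℕ := 2 * q0 s ^ 2

/-- `m_{j,k,ℓ} = ⌈(q₀/(q₀−1))·(j + k + ℓ − (k+ℓ)/q)⌉`. -/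
def mval (s j k l : ℕ) : ℤ :=
  ⌈((q0 s : ℚ) / ((q0 s : ℚ) - 1)) *
    ((j : ℚ) + (k : ℚ) + (l : ℚ) - ((k : ℚ) + (l : ℚ)) / (qS s : ℚ))⌉

/-- `F₁ = { hq − (ℓ+2k)q₀ − j : ℓ ∈ {0,1}, k,j ∈ {0,…,q₀−1},
    h ∈ {max{1, m_{j,k,ℓ}},…,2q₀} }`. -/
def F1 (s : ℕ) : Set ℕ :=
  {n | ∃ h j k l : ℕ, l ≤ 1 ∧ k < q0 s ∧ j < q0 s ∧
    max 1 (mval s j k l) ≤ (h : ℤ) ∧ h ≤ 2 * q0 s ∧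
    n = h * qS s - (l + 2 * k) * q0 s - j}

/-- `F₂ = { hq − (2h−2q₀−1)q₀ − (q₀−1) : h ∈ {q₀+1,…,2q₀} }`. -/
def F2 (s : ℕ) : Set ℕ :=
  {n | ∃ h : ℕ, q0 s + 1 ≤ h ∧ h ≤ 2 * q0 s ∧
    n = h * qS s - (2 * h - 2 * q0 s - 1) * q0 s - (q0 s - 1)}

/-- `G₁ = { hq − kq₀ − ⌊(2h−k−2)/2⌋ : h ∈ {1,…,q₀}, k ∈ {0,…,2h−2} }`. -/
def G1 (s : ℕ) : Set ℕ :=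
  {n | ∃ h k : ℕ, 1 ≤ h ∧ h ≤ q0 s ∧ k ≤ 2 * h - 2 ∧
    n = h * qS s - k * q0 s - (2 * h - k - 2) / 2}
/-!
With `Q = q₀`, `N = j + k + ℓ` and `c = k + ℓ`, one has
`Q/(Q-1) · (N - c/q) = N + e` where `e = (N - c/(2Q)) / (Q - 1)`, so `m = N + ⌈e⌉`.
Since `c ≤ Q`, the correction `c/(2Q)` lies in `[0, 1/2]`; then `Q ≤ N` gives `e > 1`,
`N ≤ 2Q - 1 ≤ 3(Q - 1)` gives `e ≤ 3`, and `N ≤ 2(Q - 1)` gives `e ≤ 2`.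
-/

section Excess

variable {K : Type*} [Field K] [LinearOrder K] [IsStrictOrderedRing K] {Q N c b : K}

theorem div_sub_one_mul_sub_div_two_mul_sq (hQ : 1 < Q) (N c : K) :
    Q / (Q - 1) * (N - c / (2 * Q ^ 2)) = N + (N - c / (2 * Q)) / (Q - 1) := by
  have hQ₀ : Q ≠ 0 := by positivity
  have hQ₁ : Q - 1 ≠ 0 := sub_ne_zero.2 hQ.ne'
  field_simp
  ring

theorem one_lt_sub_div_two_mul_div_sub_one (hQ : 1 < Q) (hN : Q ≤ N) (hc : c ≤ Q) :
    1 < (N - c / (2 * Q)) / (Q - 1) := by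
  have hc' : c / (2 * Q) ≤ 1 / 2 := by
    rw [div_le_iff₀ (by positivity)]
    linarith
  rw [lt_div_iff₀ (sub_pos.2 hQ)]
  linarith

theorem sub_div_two_mul_div_sub_one_le (hQ : 1 < Q) (hc : 0 ≤ c) (hN : N ≤ b * (Q - 1)) :
    (N - c / (2 * Q)) / (Q - 1) ≤ b := by
  have hc' : 0 ≤ c / (2 * Q) := by positivity
  rw [div_le_iff₀ (sub_pos.2 hQ)]
  linarith

theorem Nat.cast_le_mul_sub_one {n b m : ℕ} (h : n + b ≤ b * m) : (n : K) ≤ b * (m - 1) := by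
  have h' : ((n + b : ℕ) : K) ≤ (b * m : ℕ) := by exact_mod_cast h
  push_cast at h'
  linarith

end Excess

theorem two_le_q0 {s : ℕ} (hs : 1 ≤ s) : 2 ≤ q0 s :=
  Nat.pow_le_pow_right two_pos hs |>.trans_eq' (pow_one 2).symm

theorem mval_eq_add_ceil {s : ℕ} (hs : 1 ≤ s) (j k l : ℕ) :
    mval s j k l = ((j + k + l : ℕ) : ℤ) +
      ⌈((j + k + l : ℚ) - (k + l) / (2 * q0 s)) / (q0 s - 1)⌉ := by
  have hQ : (1 : ℚ) < q0 s := by exact_mod_cast two_le_q0 hs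
  rw [mval, qS, Nat.cast_mul, Nat.cast_pow, Nat.cast_ofNat,
    div_sub_one_mul_sub_div_two_mul_sq hQ, ← Int.ceil_intCast_add]
  push_cast
  rfl

/-- If `j ≥ q₀ − (k+ℓ)`, then `j+k+ℓ+2 ≤ m_{j,k,ℓ} ≤ j+k+ℓ+3`, and if moreover
`j+k+ℓ ≤ 2q₀−2` then `m_{j,k,ℓ} = j+k+ℓ+2`. -/
theorem stmt19 (s : ℕ) (hs : 1 ≤ s) (j k l : ℕ)
    (hl : l ≤ 1) (hk : k < q0 s) (hj : j < q0 s)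
    (h₁ : q0 s ≤ j + k + l) :
    ((j : ℤ) + k + l + 2 ≤ mval s j k l ∧ mval s j k l ≤ (j : ℤ) + k + l + 3) ∧
    (j + k + l ≤ 2 * q0 s - 2 → mval s j k l = (j : ℤ) + k + l + 2) := by
  have hQ2 := two_le_q0 hs
  have hQ : (1 : ℚ) < q0 s := by exact_mod_cast hQ2
  have hc : (k : ℚ) + l ≤ q0 s := by exact_mod_cast (by omega : k + l ≤ q0 s)
  have hN : (q0 s : ℚ) ≤ j + k + l := by exact_mod_cast h₁
  have hN₃ : (j : ℚ) + k + l ≤ 3 * (q0 s - 1) := by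
    exact_mod_cast Nat.cast_le_mul_sub_one (K := ℚ) (by omega : j + k + l + 3 ≤ 3 * q0 s)
  rw [mval_eq_add_ceil hs]
  set e : ℚ := ((j + k + l : ℚ) - (k + l) / (2 * q0 s)) / (q0 s - 1)
  have h_lower : (1 : ℤ) < ⌈e⌉ :=
    Int.lt_ceil.2 (by rw [Int.cast_one]; exact one_lt_sub_div_two_mul_div_sub_one hQ hN hc)
  have h_upper : ⌈e⌉ ≤ (3 : ℤ) := Int.ceil_le.2 <| by
    rw [Int.cast_ofNat]; exact sub_div_two_mul_div_sub_one_le hQ (by positivity) hN₃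
  refine ⟨⟨by push_cast; omega, by push_cast; omega⟩, fun hN₂ => ?_⟩
  have hN₂' : (j : ℚ) + k + l ≤ 2 * (q0 s - 1) := by
    exact_mod_cast Nat.cast_le_mul_sub_one (K := ℚ) (by omega : j + k + l + 2 ≤ 2 * q0 s)
  have h_upper₂ : ⌈e⌉ ≤ (2 : ℤ) := Int.ceil_le.2 <| by
    rw [Int.cast_ofNat]; exact sub_div_two_mul_div_sub_one_le hQ (by positivity) hN₂'
  push_cast
  omega
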